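/- For every k ≥ 1, the words x = t^k and y = t^k t̄^k t^k in the alphabet {t, t̄} (with t > 1 fixed) satisfy w(x) = w(y) and α(x) = α(y), and hence u_x and u_y act identically on all partitions; in particular both have α_{t-1} = k and α_t = 0 and w_t = k. -/

import Mathlib

/-- Alphabet Γ = ℕ ∪ ℕ̄ : a letter is `(false, i)` for unbarred `i` (up-operator)
and `(true, i)` for barred `ī` (down-operator); indices of interest are `i ≥ 1`. -/
abbrev Γ : Type := Bool × ℕ

/-- `c : ℕ → ℕ` records the column lengths `λ'_i` (for `i ≥ 1`) of a partition:
nonincreasing, eventually zero; `c 0 = 0` is a normalization. -/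
def IsPartition (c : ℕ → ℕ) : Prop :=
  (∀ i, 1 ≤ i → c (i + 1) ≤ c i) ∧ c 0 = 0 ∧ ∃ N, ∀ i, N ≤ i → c i = 0

open scoped Classical in
/-- The up-operator `u_i`: add a box to column `i` if the result is a partition, else `0` (`none`). -/
noncomputable def upFun (i : ℕ) (c : ℕ → ℕ) : Option (ℕ → ℕ) :=
  if 1 ≤ i ∧ IsPartition (Function.update c i (c i + 1)) then
    some (Function.update c i (c i + 1)) else none

open scoped Classical in
/-- The down-operator `d_i`: remove a box from column `i` if the result is a partition, else `0`. -/
noncomputable def downFun (i : ℕ) (c : ℕ → ℕ) : Option (ℕ → ℕ) :=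
  if 1 ≤ i ∧ 1 ≤ c i ∧ IsPartition (Function.update c i (c i - 1)) then
    some (Function.update c i (c i - 1)) else none

/-- `u_i` extended to `0` (operators applied to `0` give `0`). -/
noncomputable def U (i : ℕ) (o : Option (ℕ → ℕ)) : Option (ℕ → ℕ) := o.bind (upFun i)

/-- `d_i` extended to `0`. -/
noncomputable def D (i : ℕ) (o : Option (ℕ → ℕ)) : Option (ℕ → ℕ) := o.bind (downFun i)

/-- The action `u_x` of a word `x` on (possibly zero) partitions, rightmost letter acting first. -/
noncomputable def act (x : List Γ) (o : Option (ℕ → ℕ)) : Option (ℕ → ℕ) :=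
  x.foldr (fun l o => if l.1 then D l.2 o else U l.2 o) o

/-- The weight `w_j(x)`: occurrences of `j` minus occurrences of `j̄` in `x`. -/
def wt (j : ℕ) (x : List Γ) : ℤ :=
  (x.count ((false, j) : Γ) : ℤ) - (x.count ((true, j) : Γ) : ℤ)

/-- `α_i(x)`: the maximum of `w_{i+1}(x̃) - w_i(x̃)` over all suffix subwords `x̃` of `x`
(including the empty suffix, which contributes `0`). -/
def alphaV (i : ℕ) (x : List Γ) : ℤ :=
  (x.tails.map (fun s => wt (i + 1) s - wt i s)).foldr max 0



/-! Both words only involve the letters `t` and `t̄`, so their weights and `α`-statistics are read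
off the running count of `t` minus `t̄` along the suffixes, which stays in `[0, k]` for both words
and reaches `k`. For the action, column `t` of a partition can take any length between the
lengths of columns `t + 1` and `t - 1`: if `u_t^k` is defined on `λ`, then `d_t^k` undoes it and
`u_t^k` redoes it; if it is not, both sides are `0`. -/

lemma wt_append (j : ℕ) (x y : List Γ) : wt j (x ++ y) = wt j x + wt j y := by
  simp only [wt, List.count_append]
  push_cast
  ring

lemma wt_replicate_up (j t m : ℕ) :
    wt j (List.replicate m ((false, t) : Γ)) = if j = t then (m : ℤ) else 0 := by
  simp only [wt, List.count_replicate, beq_iff_eq, Prod.mk.injEq, Bool.false_eq_true, false_and,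
    if_false, Nat.cast_zero, sub_zero, true_and]
  split_ifs <;> simp_all

lemma wt_replicate_down (j t m : ℕ) :
    wt j (List.replicate m ((true, t) : Γ)) = if j = t then -(m : ℤ) else 0 := by
  simp only [wt, List.count_replicate, beq_iff_eq, Prod.mk.injEq, Bool.true_eq_false, false_and,
    if_false, Nat.cast_zero, zero_sub, true_and]
  split_ifs <;> simp_all

@[simp]
lemma alphaV_nil (i : ℕ) : alphaV i [] = 0 := by
  simp [alphaV, wt]

lemma alphaV_cons (i : ℕ) (a : Γ) (s : List Γ) :
    alphaV i (a :: s) = max (wt (i + 1) (a :: s) - wt i (a :: s)) (alphaV i s) := by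
  simp [alphaV]

lemma alphaV_replicate_up (i t k : ℕ) :
    alphaV i (List.replicate k ((false, t) : Γ)) = if i + 1 = t then (k : ℤ) else 0 := by
  induction k with
  | zero => simp
  | succ k ih =>
    rw [List.replicate_succ, alphaV_cons, ih, ← List.replicate_succ, wt_replicate_up,
      wt_replicate_up]
    split_ifs <;> omega

lemma alphaV_replicate_down_append_replicate_up (i t k : ℕ) {b : ℕ} (hb : b ≤ k) :
    alphaV i (List.replicate b ((true, t) : Γ) ++ List.replicate k ((false, t) : Γ)) =
      if i + 1 = t then (k : ℤ) else 0 := by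
  induction b with
  | zero => simpa using alphaV_replicate_up i t k
  | succ b ih =>
    rw [List.replicate_succ, List.cons_append, alphaV_cons, ih (by omega), ← List.cons_append,
      ← List.replicate_succ]
    simp only [wt_append, wt_replicate_up, wt_replicate_down]
    split_ifs <;> omega

lemma alphaV_replicate_up_append_replicate_down_up (i t k : ℕ) {a : ℕ} (ha : a ≤ k) :
    alphaV i (List.replicate a ((false, t) : Γ) ++
      (List.replicate k ((true, t) : Γ) ++ List.replicate k ((false, t) : Γ))) =
        if i + 1 = t then (k : ℤ) else 0 := by
  induction a with
  | zero => simpa using alphaV_replicate_down_append_replicate_up i t k le_rfl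
  | succ a ih =>
    rw [List.replicate_succ, List.cons_append, alphaV_cons, ih (by omega), ← List.cons_append,
      ← List.replicate_succ]
    simp only [wt_append, wt_replicate_up, wt_replicate_down]
    split_ifs <;> omega

lemma wt_replicate_up_down_up (j t k : ℕ) :
    wt j (List.replicate k ((false, t) : Γ) ++ List.replicate k ((true, t) : Γ) ++
      List.replicate k ((false, t) : Γ)) = wt j (List.replicate k ((false, t) : Γ)) := by
  simp only [wt_append, wt_replicate_up, wt_replicate_down]
  split_ifs <;> omega

lemma alphaV_replicate_up_down_up (i t k : ℕ) :
    alphaV i (List.replicate k ((false, t) : Γ) ++ List.replicate k ((true, t) : Γ) ++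
      List.replicate k ((false, t) : Γ)) = alphaV i (List.replicate k ((false, t) : Γ)) := by
  rw [List.append_assoc, alphaV_replicate_up_append_replicate_down_up i t k le_rfl,
    alphaV_replicate_up]

section

variable {c : ℕ → ℕ} {t : ℕ}

lemma IsPartition.apply_le_apply_pred (hc : IsPartition c) (ht : 1 < t) :
    c t ≤ c (t - 1) := by
  simpa [Nat.sub_add_cancel ht.le] using hc.1 (t - 1) (by omega)

lemma isPartition_update_iff (hc : IsPartition c) (ht : 1 < t) (n : ℕ) :
    IsPartition (Function.update c t n) ↔ c (t + 1) ≤ n ∧ n ≤ c (t - 1) := by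
  constructor
  · intro h
    have hright := h.1 t (by omega)
    have hleft := h.apply_le_apply_pred ht
    simp only [Function.update_self, Function.update_of_ne (show t + 1 ≠ t by omega),
      Function.update_of_ne (show t - 1 ≠ t by omega)] at hright hleft
    exact ⟨hright, hleft⟩
  · rintro ⟨hright, hleft⟩
    obtain ⟨hmono, h0, N, hN⟩ := hc
    refine ⟨fun i hi => ?_, ?_, max N (t + 1), fun i hi => ?_⟩
    · simp only [Function.update_apply]
      split_ifs with h₁ h₂ h₂
      · omega
      · rwa [show i = t - 1 by omega]
      · rwa [h₂]
      · exact hmono i hi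
    · rwa [Function.update_of_ne (by omega)]
    · rw [Function.update_of_ne (by omega)]
      exact hN i (by omega)

lemma act_append (x y : List Γ) (o : Option (ℕ → ℕ)) : act (x ++ y) o = act x (act y o) :=
  List.foldr_append

lemma act_none (x : List Γ) : act x none = none := by
  induction x with
  | nil => rfl
  | cons a s ih =>
    change (if a.1 then D a.2 (act s none) else U a.2 (act s none)) = none
    rw [ih]
    cases a.1 <;> rfl

lemma act_replicate_succ (l : Γ) (m : ℕ) (o : Option (ℕ → ℕ)) :
    act (List.replicate (m + 1) l) o =
      if l.1 then D l.2 (act (List.replicate m l) o) else U l.2 (act (List.replicate m l) o) :=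
  rfl

lemma upFun_of_lt (hc : IsPartition c) (ht : 1 < t) (h : c t < c (t - 1)) :
    upFun t c = some (Function.update c t (c t + 1)) := by
  have := hc.1 t (by omega)
  exact if_pos ⟨by omega, (isPartition_update_iff hc ht _).2 ⟨by omega, h⟩⟩

lemma upFun_of_eq (hc : IsPartition c) (ht : 1 < t) (h : c t = c (t - 1)) :
    upFun t c = none :=
  if_neg fun h' => by have := ((isPartition_update_iff hc ht _).1 h'.2).2; omega

lemma downFun_of_lt (hc : IsPartition c) (ht : 1 < t) (h : c (t + 1) < c t) :
    downFun t c = some (Function.update c t (c t - 1)) := by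
  have := hc.apply_le_apply_pred ht
  exact if_pos ⟨by omega, by omega, (isPartition_update_iff hc ht _).2 ⟨by omega, by omega⟩⟩

lemma act_replicate_up_of_le (hc : IsPartition c) (ht : 1 < t) {m : ℕ}
    (h : c t + m ≤ c (t - 1)) :
    act (List.replicate m ((false, t) : Γ)) (some c) = some (Function.update c t (c t + m)) := by
  induction m with
  | zero => simp [act]
  | succ m ih =>
    have hc' := (isPartition_update_iff hc ht (c t + m)).2 ⟨by have := hc.1 t (by omega); omega,
      by omega⟩
    rw [act_replicate_succ, if_neg Bool.false_ne_true, ih (by omega), U, Option.bind_some,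
      upFun_of_lt hc' ht] <;>
      simp only [Function.update_self, Function.update_of_ne (show t - 1 ≠ t by omega),
        Function.update_idem]
    · rw [add_assoc]
    · omega

lemma act_replicate_up_of_lt (hc : IsPartition c) (ht : 1 < t) {m : ℕ}
    (h : c (t - 1) < c t + m) : act (List.replicate m ((false, t) : Γ)) (some c) = none := by
  have hmono := hc.apply_le_apply_pred ht
  obtain ⟨n, rfl⟩ : ∃ n, m = n + (1 + (c (t - 1) - c t)) := ⟨m - 1 - (c (t - 1) - c t), by omega⟩
  have hfull : c t + (c (t - 1) - c t) = c (t - 1) := by omega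
  have hc' := (isPartition_update_iff hc ht (c (t - 1))).2 ⟨by have := hc.1 t (by omega); omega,
    le_rfl⟩
  rw [List.replicate_add, List.replicate_add, act_append, act_append,
    act_replicate_up_of_le hc ht hfull.le, hfull]
  change act _ (upFun t _) = none
  rw [upFun_of_eq hc' ht (by simp [Function.update_of_ne (show t - 1 ≠ t by omega)]), act_none]

lemma act_replicate_down_of_le (hc : IsPartition c) (ht : 1 < t) {m : ℕ}
    (h : c (t + 1) + m ≤ c t) :
    act (List.replicate m ((true, t) : Γ)) (some c) = some (Function.update c t (c t - m)) := by
  induction m with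
  | zero => simp [act]
  | succ m ih =>
    have hleft := hc.apply_le_apply_pred ht
    have hc' := (isPartition_update_iff hc ht (c t - m)).2 ⟨by omega, by omega⟩
    rw [act_replicate_succ, if_pos rfl, ih (by omega), D, Option.bind_some,
      downFun_of_lt hc' ht] <;>
      simp only [Function.update_self, Function.update_of_ne (show t + 1 ≠ t by omega),
        Function.update_idem]
    · rw [Nat.sub_sub]
    · omega

lemma act_replicate_up_down_up (hc : IsPartition c) (ht : 1 < t) (k : ℕ) :
    act (List.replicate k ((false, t) : Γ) ++ List.replicate k ((true, t) : Γ) ++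
      List.replicate k ((false, t) : Γ)) (some c) =
        act (List.replicate k ((false, t) : Γ)) (some c) := by
  rw [act_append, act_append]
  by_cases h : c t + k ≤ c (t - 1)
  · have hright := hc.1 t (by omega)
    have hc' := (isPartition_update_iff hc ht (c t + k)).2 ⟨by omega, h⟩
    have hdown : Function.update c t (c t + k) (t + 1) + k ≤ Function.update c t (c t + k) t := by
      simp only [Function.update_self, Function.update_of_ne (show t + 1 ≠ t by omega)]
      omega
    rw [act_replicate_up_of_le hc ht h, act_replicate_down_of_le hc' ht hdown]
    simp only [Function.update_self, Function.update_idem, Nat.add_sub_cancel,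
      Function.update_eq_self]
    exact act_replicate_up_of_le hc ht h
  · rw [act_replicate_up_of_lt hc ht (by omega), act_none, act_none]

end

theorem unbounded_example_general (t : ℕ) (ht : 1 < t) (k : ℕ) :
    (∀ j, 1 ≤ j →
      wt j (List.replicate k ((false, t) : Γ)) =
        wt j (List.replicate k ((false, t) : Γ) ++ List.replicate k ((true, t) : Γ) ++
              List.replicate k ((false, t) : Γ)) ∧
      alphaV j (List.replicate k ((false, t) : Γ)) =
        alphaV j (List.replicate k ((false, t) : Γ) ++ List.replicate k ((true, t) : Γ) ++
              List.replicate k ((false, t) : Γ))) ∧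
    (∀ c : ℕ → ℕ, IsPartition c →
      act (List.replicate k ((false, t) : Γ)) (some c) =
      act (List.replicate k ((false, t) : Γ) ++ List.replicate k ((true, t) : Γ) ++
           List.replicate k ((false, t) : Γ)) (some c)) ∧
    alphaV (t - 1) (List.replicate k ((false, t) : Γ)) = k ∧
    alphaV t (List.replicate k ((false, t) : Γ)) = 0 ∧
    wt t (List.replicate k ((false, t) : Γ)) = k := by
  refine ⟨fun j _ => ⟨(wt_replicate_up_down_up j t k).symm,
    (alphaV_replicate_up_down_up j t k).symm⟩,
    fun c hc => (act_replicate_up_down_up hc ht k).symm, ?_, ?_, ?_⟩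
  · rw [alphaV_replicate_up, if_pos (by omega)]
  · rw [alphaV_replicate_up, if_neg (by omega)]
  · rw [wt_replicate_up, if_pos rfl]

theorem unbounded_example (t : ℕ) (ht : 1 < t) (k : ℕ) (hk : 1 ≤ k) :
    (∀ j, 1 ≤ j →
      wt j (List.replicate k ((false, t) : Γ)) =
        wt j (List.replicate k ((false, t) : Γ) ++ List.replicate k ((true, t) : Γ) ++
              List.replicate k ((false, t) : Γ)) ∧
      alphaV j (List.replicate k ((false, t) : Γ)) =
        alphaV j (List.replicate k ((false, t) : Γ) ++ List.replicate k ((true, t) : Γ) ++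
              List.replicate k ((false, t) : Γ))) ∧
    (∀ c : ℕ → ℕ, IsPartition c →
      act (List.replicate k ((false, t) : Γ)) (some c) =
      act (List.replicate k ((false, t) : Γ) ++ List.replicate k ((true, t) : Γ) ++
           List.replicate k ((false, t) : Γ)) (some c)) ∧
    alphaV (t - 1) (List.replicate k ((false, t) : Γ)) = k ∧
    alphaV t (List.replicate k ((false, t) : Γ)) = 0 ∧
    wt t (List.replicate k ((false, t) : Γ)) = k :=
  unbounded_example_general t ht k
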